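/- arXiv:1506.01604 — 3 statements merged into one kernel-verified Lean document; each statement's English description precedes it below -/
import Mathlib

section
/- In ℤ[SL₂(F)] the following mixed products of C with D₊, D₋, E₊, E₋ hold: C·D₊ = C·E₋ = (q−1)(q−3)·C + (q−1)(q−2)·(D₋+E₊); C·D₋ = C·E₊ = (q−1)(q−3)·C + (q−1)(q−2)·(D₊+E₋); D₊·C = E₊·C = (q−1)(q−3)·C + (q−1)(q−2)·(D₋+E₋); D₋·C = E₋·C = (q−1)(q−3)·C + (q−1)(q−2)·(D₊+E₊). -/
open MonoidAlgebra

/-- Sum of all elements of `SL₂(F)` whose support pattern is given by the four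
Booleans (`true` = the entry is nonzero, `false` = the entry is zero). -/
noncomputable def suppClass (R : Type*) [CommRing R] (F : Type*) [Field F] [Fintype F]
    [DecidableEq F] (b₁₁ b₁₂ b₂₁ b₂₂ : Bool) :
    MonoidAlgebra R (Matrix.SpecialLinearGroup (Fin 2) F) :=
  ∑ g ∈ Finset.univ.filter
      (fun g : Matrix.SpecialLinearGroup (Fin 2) F =>
        (b₁₁ = true ↔ (g : Matrix (Fin 2) (Fin 2) F) 0 0 ≠ 0) ∧
        (b₁₂ = true ↔ (g : Matrix (Fin 2) (Fin 2) F) 0 1 ≠ 0) ∧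
        (b₂₁ = true ↔ (g : Matrix (Fin 2) (Fin 2) F) 1 0 ≠ 0) ∧
        (b₂₂ = true ↔ (g : Matrix (Fin 2) (Fin 2) F) 1 1 ≠ 0)),
    MonoidAlgebra.of R (Matrix.SpecialLinearGroup (Fin 2) F) g

/-- The support class `A` (diagonal matrices). -/
noncomputable def elA (R : Type*) [CommRing R] (F : Type*) [Field F] [Fintype F] [DecidableEq F] :=
  suppClass R F true false false true
/-- The support class `B` (antidiagonal matrices). -/
noncomputable def elB (R : Type*) [CommRing R] (F : Type*) [Field F] [Fintype F] [DecidableEq F] :=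
  suppClass R F false true true false
/-- The support class `C` (matrices with all entries nonzero). -/
noncomputable def elC (R : Type*) [CommRing R] (F : Type*) [Field F] [Fintype F] [DecidableEq F] :=
  suppClass R F true true true true
/-- The support class `D₊` (upper triangular with nonzero entries). -/
noncomputable def elDp (R : Type*) [CommRing R] (F : Type*) [Field F] [Fintype F] [DecidableEq F] :=
  suppClass R F true true false true
/-- The support class `D₋` (lower triangular with nonzero entries). -/
noncomputable def elDm (R : Type*) [CommRing R] (F : Type*) [Field F] [Fintype F] [DecidableEq F] :=
  suppClass R F true false true true
/-- The support class `E₊`. -/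
noncomputable def elEp (R : Type*) [CommRing R] (F : Type*) [Field F] [Fintype F] [DecidableEq F] :=
  suppClass R F true true true false
/-- The support class `E₋`. -/
noncomputable def elEm (R : Type*) [CommRing R] (F : Type*) [Field F] [Fintype F] [DecidableEq F] :=
  suppClass R F false true true true

/-! The coefficient of `k` in `C * D₊` counts the `u ∈ D₊` with `k * u⁻¹ ∈ C`. Writing
`u = !![a, t * a; 0, a⁻¹]`, this is `(q - 1)` times the number of `t` different from `0`,
`k₁₂ / k₁₁` and `k₂₂ / k₂₁`; the determinant makes the last two distinct, so the count is `q - 3`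
on `C` and `q - 2` on `D₋` (where `k₁₂ = 0`) and on `E₊` (where `k₂₂ = 0`).

The seven other products follow by symmetry. Multiplying by `w = !![0, 1; -1, 0]` on the left
(right) swaps the rows (columns) of a support pattern and fixes `C`, while the antipode `g ↦ g⁻¹`
reverses products, swaps the diagonal entries of a pattern, and so fixes `C`, `D₊`, `D₋` and
swaps `E₊` with `E₋`. -/

open Finset
open scoped MatrixGroups

namespace MonoidAlgebra

variable {R G : Type*} [Group G]

section Semiring

variable [Semiring R]

theorem coeff_sum_of [DecidableEq G] (S : Finset G) (k : G) :
    (∑ g ∈ S, of R G g).coeff k = if k ∈ S then 1 else 0 := by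
  simp [coeff_sum, Finsupp.single_apply]

theorem coeff_sum_of_mul_sum_of [DecidableEq G] (S T : Finset G) (k : G) :
    ((∑ g ∈ S, of R G g) * ∑ h ∈ T, of R G h).coeff k = #{h ∈ T | k * h⁻¹ ∈ S} := by
  simp [mul_sum, coeff_sum, coeff_mul_single_apply, Finsupp.single_apply]

theorem of_mul_sum_of {S T : Finset G} (g : G) (h : ∀ x, x ∈ S ↔ g * x ∈ T) :
    of R G g * ∑ x ∈ S, of R G x = ∑ x ∈ T, of R G x := by
  simp only [mul_sum, ← map_mul]
  exact sum_equiv (Equiv.mulLeft g) h fun _ _ => rfl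

theorem sum_of_mul_of {S T : Finset G} (g : G) (h : ∀ x, x ∈ S ↔ x * g ∈ T) :
    (∑ x ∈ S, of R G x) * of R G g = ∑ x ∈ T, of R G x := by
  simp only [sum_mul, ← map_mul]
  exact sum_equiv (Equiv.mulRight g) h fun _ _ => rfl

end Semiring

theorem antipode_sum_of [CommSemiring R] {S T : Finset G} (h : ∀ x, x ∈ S ↔ x⁻¹ ∈ T) :
    HopfAlgebra.antipode R (∑ x ∈ S, of R G x) = ∑ x ∈ T, of R G x := by
  simp only [map_sum, of_apply, antipode_single]
  exact sum_equiv (Equiv.inv G) h fun _ _ => rfl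

end MonoidAlgebra

namespace Matrix.SpecialLinearGroup

variable {F : Type*} [Field F]

local notation:1024 "↑ₘ" A:1024 => ((A : SL(2, F)) : Matrix (Fin 2) (Fin 2) F)

theorem det_fin_two_eq_one (k : SL(2, F)) : k 0 0 * k 1 1 - k 0 1 * k 1 0 = 1 := by
  rw [← Matrix.det_fin_two]
  exact k.det_coe

def weyl : SL(2, F) := ⟨!![0, 1; -1, 0], by simp [Matrix.det_fin_two_of]⟩

theorem coe_weyl : ↑ₘ(weyl : SL(2, F)) = !![0, 1; -1, 0] := rfl

theorem coe_weyl_mul (g : SL(2, F)) : ↑ₘ(weyl * g) = !![g 1 0, g 1 1; -g 0 0, -g 0 1] := by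
  rw [coe_mul, coe_weyl, Matrix.eta_fin_two ↑ₘg, Matrix.mul_fin_two]
  simp

theorem coe_mul_weyl (g : SL(2, F)) : ↑ₘ(g * weyl) = !![-g 0 1, g 0 0; -g 1 1, g 1 0] := by
  rw [coe_mul, coe_weyl, Matrix.eta_fin_two ↑ₘg, Matrix.mul_fin_two]
  simp

/-- Parametrised by `t = u₁₂ / u₁₁` rather than by `u₁₂`, so that whether
`k * (upperTri a t)⁻¹ ∈ C` does not depend on `a`. -/
def upperTri (a : Fˣ) (t : F) : SL(2, F) :=
  ⟨!![(a : F), t * a; 0, (a : F)⁻¹], by simp [Matrix.det_fin_two_of]⟩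

theorem coe_upperTri (a : Fˣ) (t : F) :
    ↑ₘ(upperTri a t) = !![(a : F), t * a; 0, (a : F)⁻¹] := rfl

theorem upperTri_injective : Function.Injective fun p : Fˣ × F => upperTri p.1 p.2 := by
  rintro ⟨a, t⟩ ⟨a', t'⟩ h
  have h00 : (a : F) = a' := congr_fun (congr_fun (congrArg Subtype.val h) 0) 0
  have h01 : t * a = t' * a' := congr_fun (congr_fun (congrArg Subtype.val h) 0) 1
  obtain rfl : a = a' := Units.ext h00
  exact Prod.ext rfl (mul_right_cancel₀ a.ne_zero h01)

theorem exists_upperTri_eq {u : SL(2, F)} (h10 : u 1 0 = 0) (h00 : u 0 0 ≠ 0) :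
    ∃ a t, upperTri a t = u := by
  have h11 : (u 0 0)⁻¹ = u 1 1 :=
    (eq_inv_of_mul_eq_one_right (by simpa [h10] using det_fin_two_eq_one u)).symm
  refine ⟨Units.mk0 _ h00, u 0 1 / u 0 0, ?_⟩
  ext i j
  fin_cases i <;> fin_cases j <;> simp [coe_upperTri, h10, h00, h11]

theorem coe_mul_inv_upperTri (k : SL(2, F)) (a : Fˣ) (t : F) :
    ↑ₘ(k * (upperTri a t)⁻¹) =
      !![k 0 0 * (a : F)⁻¹, (k 0 1 - k 0 0 * t) * a; k 1 0 * (a : F)⁻¹, (k 1 1 - k 1 0 * t) * a] := by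
  rw [coe_mul, coe_inv, Matrix.adjugate_fin_two, coe_upperTri, Matrix.eta_fin_two ↑ₘk,
    Matrix.mul_fin_two]
  simp only [Matrix.of_apply, Matrix.cons_val', Matrix.cons_val_zero, Matrix.cons_val_one,
    Matrix.cons_val_fin_one, neg_zero, mul_zero, add_zero, mul_neg, EmbeddingLike.apply_eq_iff_eq,
    Matrix.vecCons_inj, and_true, true_and]
  constructor <;> ring

end Matrix.SpecialLinearGroup

open Matrix.SpecialLinearGroup

section SupportClasses

variable {F : Type*} [Field F] [Fintype F] [DecidableEq F]

def supportSet (b₁₁ b₁₂ b₂₁ b₂₂ : Bool) : Finset SL(2, F) :=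
  {g | (b₁₁ = true ↔ g 0 0 ≠ 0) ∧ (b₁₂ = true ↔ g 0 1 ≠ 0) ∧
    (b₂₁ = true ↔ g 1 0 ≠ 0) ∧ (b₂₂ = true ↔ g 1 1 ≠ 0)}

theorem suppClass_eq_sum (R : Type*) [CommRing R] (b₁₁ b₁₂ b₂₁ b₂₂ : Bool) :
    suppClass R F b₁₁ b₁₂ b₂₁ b₂₂ = ∑ g ∈ supportSet b₁₁ b₁₂ b₂₁ b₂₂, of R SL(2, F) g := rfl

theorem mem_supportSet {b₁₁ b₁₂ b₂₁ b₂₂ : Bool} {g : SL(2, F)} :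
    g ∈ supportSet b₁₁ b₁₂ b₂₁ b₂₂ ↔ (b₁₁ = true ↔ g 0 0 ≠ 0) ∧ (b₁₂ = true ↔ g 0 1 ≠ 0) ∧
      (b₂₁ = true ↔ g 1 0 ≠ 0) ∧ (b₂₂ = true ↔ g 1 1 ≠ 0) := by
  simp [supportSet]

theorem weyl_mul_mem_supportSet {b₁₁ b₁₂ b₂₁ b₂₂ : Bool} {g : SL(2, F)} :
    weyl * g ∈ supportSet b₂₁ b₂₂ b₁₁ b₁₂ ↔ g ∈ supportSet b₁₁ b₁₂ b₂₁ b₂₂ := by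
  simp only [mem_supportSet]
  rw [coe_weyl_mul]
  simp only [Matrix.of_apply, Matrix.cons_val', Matrix.cons_val_zero, Matrix.cons_val_one,
    Matrix.cons_val_fin_one, ne_eq, neg_eq_zero]
  tauto

theorem mul_weyl_mem_supportSet {b₁₁ b₁₂ b₂₁ b₂₂ : Bool} {g : SL(2, F)} :
    g * weyl ∈ supportSet b₁₂ b₁₁ b₂₂ b₂₁ ↔ g ∈ supportSet b₁₁ b₁₂ b₂₁ b₂₂ := by
  simp only [mem_supportSet]
  rw [coe_mul_weyl]
  simp only [Matrix.of_apply, Matrix.cons_val', Matrix.cons_val_zero, Matrix.cons_val_one,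
    Matrix.cons_val_fin_one, ne_eq, neg_eq_zero]
  tauto

theorem inv_mem_supportSet {b₁₁ b₁₂ b₂₁ b₂₂ : Bool} {g : SL(2, F)} :
    g⁻¹ ∈ supportSet b₂₂ b₁₂ b₂₁ b₁₁ ↔ g ∈ supportSet b₁₁ b₁₂ b₂₁ b₂₂ := by
  simp only [mem_supportSet]
  rw [Matrix.SpecialLinearGroup.coe_inv, Matrix.adjugate_fin_two]
  simp only [Matrix.of_apply, Matrix.cons_val', Matrix.cons_val_zero, Matrix.cons_val_one,
    Matrix.cons_val_fin_one, ne_eq, neg_eq_zero]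
  tauto

theorem upperTri_mem_supportSet {a : Fˣ} {t : F} :
    upperTri a t ∈ supportSet true true false true ↔ t ≠ 0 := by
  simp [mem_supportSet, coe_upperTri]

theorem mul_inv_upperTri_mem_supportSet {k : SL(2, F)} {a : Fˣ} {t : F} :
    k * (upperTri a t)⁻¹ ∈ supportSet true true true true ↔
      k 0 0 ≠ 0 ∧ k 0 1 ≠ k 0 0 * t ∧ k 1 0 ≠ 0 ∧ k 1 1 ≠ k 1 0 * t := by
  rw [mem_supportSet, coe_mul_inv_upperTri]
  simp [sub_ne_zero]

theorem card_filter_supportSet_Dp (P : SL(2, F) → Prop) [DecidablePred P] :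
    #{u ∈ supportSet true true false true | P u} =
      #{p : Fˣ × F | p.2 ≠ 0 ∧ P (upperTri p.1 p.2)} := by
  symm
  apply card_nbij (fun p => upperTri p.1 p.2)
  · intro p hp
    simpa [upperTri_mem_supportSet] using hp
  · exact upperTri_injective.injOn
  · intro u hu
    obtain ⟨⟨h00, -, h10, -⟩, -⟩ : (u 0 0 ≠ 0 ∧ _ ∧ u 1 0 = 0 ∧ _) ∧ _ := by
      simpa [mem_supportSet] using hu
    obtain ⟨a, t, rfl⟩ := exists_upperTri_eq h10 h00
    refine ⟨(a, t), ?_, rfl⟩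
    simpa [upperTri_mem_supportSet] using hu

theorem card_filter_supportSet_Dp_mul_inv_mem_C (k : SL(2, F)) :
    #{u ∈ supportSet true true false true | k * u⁻¹ ∈ supportSet true true true true} =
      (Fintype.card F - 1) *
        #{t : F | t ≠ 0 ∧ k 0 0 ≠ 0 ∧ k 0 1 ≠ k 0 0 * t ∧ k 1 0 ≠ 0 ∧ k 1 1 ≠ k 1 0 * t} := by
  rw [card_filter_supportSet_Dp, ← Fintype.card_units, ← card_univ, ← card_product]
  congr 1
  ext
  simp [mul_inv_upperTri_mem_supportSet]

theorem card_filter_ne_zero_ne_ne {x y : F} (hxy : x ≠ y) :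
    (#{t : F | t ≠ 0 ∧ t ≠ x ∧ t ≠ y} : ℤ) =
      Fintype.card F - 3 + (if x = 0 then 1 else 0) + (if y = 0 then 1 else 0) := by
  have h : #{t : F | t ≠ 0 ∧ t ≠ x ∧ t ≠ y} = Fintype.card F - #{0, x, y} := by
    rw [← card_compl]
    congr 1
    ext
    simp
  rw [h, Nat.cast_sub (card_le_univ _)]
  split_ifs with hx hy hy
  · exact absurd (hx.trans hy.symm) hxy
  · subst hx
    rw [insert_eq_of_mem (mem_insert_self _ _), card_pair (Ne.symm hy)]
    push_cast
    ring
  · subst hy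
    rw [insert_eq_of_mem (by simp), card_pair hx]
    push_cast
    ring
  · rw [card_insert_of_notMem (by simp [Ne.symm hx, Ne.symm hy]), card_pair hxy]
    push_cast
    ring

theorem card_filter_ne_zero_mul_ne_mul_ne {k : SL(2, F)} (h00 : k 0 0 ≠ 0) (h10 : k 1 0 ≠ 0) :
    (#{t : F | t ≠ 0 ∧ k 0 1 ≠ k 0 0 * t ∧ k 1 1 ≠ k 1 0 * t} : ℤ) =
      Fintype.card F - 3 + (if k 0 1 = 0 then 1 else 0) + (if k 1 1 = 0 then 1 else 0) := by
  have hxy : k 0 1 / k 0 0 ≠ k 1 1 / k 1 0 := by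
    rw [ne_eq, div_eq_div_iff h00 h10]
    intro h
    exact one_ne_zero ((det_fin_two_eq_one k).symm.trans (by linear_combination -h))
  convert card_filter_ne_zero_ne_ne hxy using 3
  · ext t
    simp [eq_div_iff, h00, h10, mul_comm t, eq_comm]
  all_goals simp [h00, h10]

variable (R : Type*) [CommRing R]

theorem of_weyl_mul_suppClass (b₁₁ b₁₂ b₂₁ b₂₂ : Bool) :
    of R SL(2, F) weyl * suppClass R F b₁₁ b₁₂ b₂₁ b₂₂ = suppClass R F b₂₁ b₂₂ b₁₁ b₁₂ :=
  of_mul_sum_of weyl fun _ => weyl_mul_mem_supportSet.symm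

theorem suppClass_mul_of_weyl (b₁₁ b₁₂ b₂₁ b₂₂ : Bool) :
    suppClass R F b₁₁ b₁₂ b₂₁ b₂₂ * of R SL(2, F) weyl = suppClass R F b₁₂ b₁₁ b₂₂ b₂₁ :=
  sum_of_mul_of weyl fun _ => mul_weyl_mem_supportSet.symm

theorem antipode_suppClass (b₁₁ b₁₂ b₂₁ b₂₂ : Bool) :
    HopfAlgebra.antipode R (suppClass R F b₁₁ b₁₂ b₂₁ b₂₂) = suppClass R F b₂₂ b₁₂ b₂₁ b₁₁ :=
  antipode_sum_of fun _ => inv_mem_supportSet.symm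

theorem coeff_elC_mul_elDp (k : SL(2, F)) :
    (elC R F * elDp R F).coeff k =
      if k 0 0 ≠ 0 ∧ k 1 0 ≠ 0 then
        ((Fintype.card F : R) - 1) *
          (Fintype.card F - 3 + (if k 0 1 = 0 then 1 else 0) + (if k 1 1 = 0 then 1 else 0))
      else 0 := by
  rw [elC, elDp, suppClass_eq_sum, suppClass_eq_sum, coeff_sum_of_mul_sum_of,
    card_filter_supportSet_Dp_mul_inv_mem_C]
  by_cases hk : k 0 0 ≠ 0 ∧ k 1 0 ≠ 0
  · simp only [hk.1, hk.2, ne_eq, not_false_eq_true, true_and]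
    have := congrArg (Int.cast : ℤ → R) (card_filter_ne_zero_mul_ne_mul_ne hk.1 hk.2)
    push_cast [Nat.cast_sub (Fintype.card_pos : 1 ≤ Fintype.card F)] at this ⊢
    rw [this]
  · rw [if_neg hk]
    rcases not_and_or.1 hk with h | h <;> simp [not_not.1 h]

theorem elC_mul_elDp :
    elC R F * elDp R F =
      (((Fintype.card F : ℤ) - 1) * (Fintype.card F - 3)) • elC R F +
        (((Fintype.card F : ℤ) - 1) * (Fintype.card F - 2)) • (elDm R F + elEp R F) := by
  ext k
  rw [coeff_elC_mul_elDp]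
  simp only [elC, elDm, elEp, suppClass_eq_sum, coeff_add, coeff_smul, Finsupp.add_apply,
    Finsupp.smul_apply, coeff_sum_of, mem_supportSet]
  by_cases h00 : k 0 0 = 0
  · simp [h00]
  by_cases h10 : k 1 0 = 0
  · simp [h10]
  have hq : (Fintype.card F : R) - 3 + 1 = Fintype.card F - 2 := by ring
  by_cases h01 : k 0 1 = 0
  · have h11 : k 1 1 ≠ 0 := by
      rintro h
      simpa [h01, h] using det_fin_two_eq_one k
    simp [h00, h10, h01, h11, hq]
  by_cases h11 : k 1 1 = 0
  · simp [h00, h10, h01, h11, hq]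
  · simp [h00, h10, h01, h11]

end SupportClasses

theorem elC_mixed_products_general (F : Type*) [Field F] [Fintype F] [DecidableEq F]
    (q : ℤ) (hqc : q = Fintype.card F) :
    elC ℤ F * elDp ℤ F =
        ((q - 1) * (q - 3)) • elC ℤ F + ((q - 1) * (q - 2)) • (elDm ℤ F + elEp ℤ F) ∧
    elC ℤ F * elEm ℤ F =
        ((q - 1) * (q - 3)) • elC ℤ F + ((q - 1) * (q - 2)) • (elDm ℤ F + elEp ℤ F) ∧
    elC ℤ F * elDm ℤ F =
        ((q - 1) * (q - 3)) • elC ℤ F + ((q - 1) * (q - 2)) • (elDp ℤ F + elEm ℤ F) ∧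
    elC ℤ F * elEp ℤ F =
        ((q - 1) * (q - 3)) • elC ℤ F + ((q - 1) * (q - 2)) • (elDp ℤ F + elEm ℤ F) ∧
    elDp ℤ F * elC ℤ F =
        ((q - 1) * (q - 3)) • elC ℤ F + ((q - 1) * (q - 2)) • (elDm ℤ F + elEm ℤ F) ∧
    elEp ℤ F * elC ℤ F =
        ((q - 1) * (q - 3)) • elC ℤ F + ((q - 1) * (q - 2)) • (elDm ℤ F + elEm ℤ F) ∧
    elDm ℤ F * elC ℤ F =
        ((q - 1) * (q - 3)) • elC ℤ F + ((q - 1) * (q - 2)) • (elDp ℤ F + elEp ℤ F) ∧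
    elEm ℤ F * elC ℤ F =
        ((q - 1) * (q - 3)) • elC ℤ F + ((q - 1) * (q - 2)) • (elDp ℤ F + elEp ℤ F) := by
  subst hqc
  have hCDp := elC_mul_elDp (F := F) ℤ
  have hEpC : elEp ℤ F * elC ℤ F = elDp ℤ F * elC ℤ F := by
    rw [elEp, elC, elDp, ← suppClass_mul_of_weyl ℤ true true false true, mul_assoc,
      of_weyl_mul_suppClass]
  simp only [elC, elDp, elDm, elEp, elEm] at hCDp hEpC ⊢
  have hDpC := congrArg (HopfAlgebra.antipode ℤ) hCDp
  simp only [HopfAlgebra.antipode_mul_antidistrib, map_add, map_zsmul, antipode_suppClass]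
    at hDpC
  have hCEp := congrArg (· * of ℤ SL(2, F) weyl) hCDp
  simp only [mul_assoc, add_mul, smul_mul_assoc, suppClass_mul_of_weyl] at hCEp
  rw [add_comm (suppClass ℤ F false true true true)] at hCEp
  have hEmC := congrArg (of ℤ SL(2, F) weyl * ·) hDpC
  simp only [← mul_assoc, mul_add, mul_smul_comm, of_weyl_mul_suppClass] at hEmC
  rw [add_comm (suppClass ℤ F true true true false)] at hEmC
  refine ⟨hCDp, ?_, ?_, hCEp, hDpC, hEpC.trans hDpC, ?_, hEmC⟩
  · rw [← of_weyl_mul_suppClass ℤ true true false true, ← mul_assoc, suppClass_mul_of_weyl, hCDp]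
  · rw [← of_weyl_mul_suppClass ℤ true true true false, ← mul_assoc, suppClass_mul_of_weyl, hCEp]
  · rw [← of_weyl_mul_suppClass ℤ true true true false, mul_assoc, hEpC, ← mul_assoc,
      of_weyl_mul_suppClass, hEmC]

theorem elC_mixed_products (F : Type*) [Field F] [Fintype F] [DecidableEq F]
    (hq : 2 < Fintype.card F) (q : ℤ) (hqc : q = Fintype.card F) :
    elC ℤ F * elDp ℤ F =
        ((q - 1) * (q - 3)) • elC ℤ F + ((q - 1) * (q - 2)) • (elDm ℤ F + elEp ℤ F) ∧
    elC ℤ F * elEm ℤ F =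
        ((q - 1) * (q - 3)) • elC ℤ F + ((q - 1) * (q - 2)) • (elDm ℤ F + elEp ℤ F) ∧
    elC ℤ F * elDm ℤ F =
        ((q - 1) * (q - 3)) • elC ℤ F + ((q - 1) * (q - 2)) • (elDp ℤ F + elEm ℤ F) ∧
    elC ℤ F * elEp ℤ F =
        ((q - 1) * (q - 3)) • elC ℤ F + ((q - 1) * (q - 2)) • (elDp ℤ F + elEm ℤ F) ∧
    elDp ℤ F * elC ℤ F =
        ((q - 1) * (q - 3)) • elC ℤ F + ((q - 1) * (q - 2)) • (elDm ℤ F + elEm ℤ F) ∧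
    elEp ℤ F * elC ℤ F =
        ((q - 1) * (q - 3)) • elC ℤ F + ((q - 1) * (q - 2)) • (elDm ℤ F + elEm ℤ F) ∧
    elDm ℤ F * elC ℤ F =
        ((q - 1) * (q - 3)) • elC ℤ F + ((q - 1) * (q - 2)) • (elDp ℤ F + elEp ℤ F) ∧
    elEm ℤ F * elC ℤ F =
        ((q - 1) * (q - 3)) • elC ℤ F + ((q - 1) * (q - 2)) • (elDp ℤ F + elEp ℤ F) :=
  elC_mixed_products_general F q hqc
end

section
/- In ℤ[SL₂(F)] the following mixed products of D₊, D₋ with E₊, E₋ hold: D₊·E₊ = E₊·D₋ = (q−1)²·B + (q−1)(q−2)·E₊; E₋·D₊ = D₋·E₋ = (q−1)²·B + (q−1)(q−2)·E₋; E₊·D₊ = D₊·E₋ = (q−1)·(C + D₋); D₋·E₊ = E₋·D₋ = (q−1)·(C + D₊). -/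
open MonoidAlgebra

/-!
Write `w` for the Weyl element `!![0, -1; 1, 0]`. Multiplying by `w` on either side permutes the
four matrix positions, hence permutes the support classes (`D₊ w = E₊`, `w D₋ = E₊`, `w D₊ = E₋`,
`w E₊ = D₋`, ...), and all eight products reduce to `D₊ D₊` and `E₊ D₊ = D₊ w D₊`.

The upper triangular Borel subgroup sums to `A + D₊`, and the sum over a finite subgroup squares to
its order times itself. As the diagonal torus `A` permutes every support class,
`A X = X A = (q - 1) X`, and expanding `(A + D₊)² = q (q - 1) (A + D₊)` gives `D₊ D₊`.

For `D₊ w D₊`: the products `[[u, v], [0, u⁻¹]] w [[u', v'], [0, u'⁻¹]]` run over the matrices with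
nonzero entries at `(0,0)`, `(1,0)`, `(1,1)`, i.e. over `C ∪ D₋`, each one exactly `q - 1` times.
-/

open Finset
open scoped MatrixGroups

namespace MonoidAlgebra

variable {k G : Type*} [Semiring k] [Group G] [Fintype G]

theorem of_mul_sum_filter_of (a : G) {p q : G → Prop} [DecidablePred p] [DecidablePred q]
    (h : ∀ g, q (a * g) ↔ p g) :
    of k G a * ∑ g ∈ univ.filter p, of k G g = ∑ g ∈ univ.filter q, of k G g := by
  rw [mul_sum]
  exact sum_equiv (Equiv.mulLeft a) (by simp [h]) (fun g _ => (map_mul _ _ _).symm)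

theorem sum_filter_of_mul_of (a : G) {p q : G → Prop} [DecidablePred p] [DecidablePred q]
    (h : ∀ g, q (g * a) ↔ p g) :
    (∑ g ∈ univ.filter p, of k G g) * of k G a = ∑ g ∈ univ.filter q, of k G g := by
  rw [sum_mul]
  exact sum_equiv (Equiv.mulRight a) (by simp [h]) (fun g _ => (map_mul _ _ _).symm)

theorem sum_subgroup_mul_self (H : Subgroup G) [DecidablePred (· ∈ H)] :
    (∑ g ∈ univ.filter (· ∈ H), of k G g) * ∑ g ∈ univ.filter (· ∈ H), of k G g
      = #(univ.filter (· ∈ H)) • ∑ g ∈ univ.filter (· ∈ H), of k G g := by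
  rw [sum_mul, ← sum_const]
  refine sum_congr rfl fun a ha => of_mul_sum_filter_of a fun g => ?_
  exact H.mul_mem_cancel_left (by simpa using ha)

end MonoidAlgebra

namespace SL2

variable {F : Type*} [Field F]

theorem det_eq_one (g : SL(2, F)) : g 0 0 * g 1 1 - g 0 1 * g 1 0 = 1 :=
  (Matrix.det_fin_two _).symm.trans g.2

def weyl : SL(2, F) := ⟨!![0, -1; 1, 0], by simp [Matrix.det_fin_two_of]⟩

theorem coe_weyl : ((weyl : SL(2, F)) : Matrix (Fin 2) (Fin 2) F) = !![0, -1; 1, 0] := rfl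

theorem coe_weyl_mul (g : SL(2, F)) :
    ((weyl * g : SL(2, F)) : Matrix (Fin 2) (Fin 2) F) = !![-g 1 0, -g 1 1; g 0 0, g 0 1] := by
  ext i j; fin_cases i <;> fin_cases j <;> simp [coe_weyl, Matrix.mul_apply]

theorem coe_mul_weyl (g : SL(2, F)) :
    ((g * weyl : SL(2, F)) : Matrix (Fin 2) (Fin 2) F) = !![g 0 1, -g 0 0; g 1 1, -g 1 0] := by
  ext i j; fin_cases i <;> fin_cases j <;> simp [coe_weyl, Matrix.mul_apply]

def borel : Subgroup SL(2, F) where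
  carrier := {g | g 1 0 = 0}
  mul_mem' {g h} hg hh := by
    simp_all [Matrix.SpecialLinearGroup.coe_mul, Matrix.mul_apply, Fin.sum_univ_two]
  one_mem' := by simp
  inv_mem' {g} hg := by simp_all [Matrix.SpecialLinearGroup.coe_inv, Matrix.adjugate_fin_two]

def upper (u : Fˣ) (v : F) : SL(2, F) := ⟨!![u, v; 0, u⁻¹], by simp [Matrix.det_fin_two_of]⟩

theorem coe_upper (u : Fˣ) (v : F) :
    ((upper u v : SL(2, F)) : Matrix (Fin 2) (Fin 2) F) = !![(u : F), v; 0, (u : F)⁻¹] := rfl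

theorem upper_inj {u u' : Fˣ} {v v' : F} : upper u v = upper u' v' ↔ u = u' ∧ v = v' := by
  refine ⟨fun h => ?_, fun h => h.1 ▸ h.2 ▸ rfl⟩
  have h00 := congr_arg (fun g : SL(2, F) => g 0 0) h
  have h01 := congr_arg (fun g : SL(2, F) => g 0 1) h
  simp only [coe_upper] at h00 h01
  simp_all [Units.ext_iff]

theorem coe_upper_zero_mul (u : Fˣ) (g : SL(2, F)) :
    ((upper u 0 * g : SL(2, F)) : Matrix (Fin 2) (Fin 2) F)
      = !![u * g 0 0, u * g 0 1; (u : F)⁻¹ * g 1 0, (u : F)⁻¹ * g 1 1] := by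
  ext i j; fin_cases i <;> fin_cases j <;> simp [coe_upper, Matrix.mul_apply]

theorem coe_mul_upper_zero (u : Fˣ) (g : SL(2, F)) :
    ((g * upper u 0 : SL(2, F)) : Matrix (Fin 2) (Fin 2) F)
      = !![g 0 0 * u, g 0 1 * (u : F)⁻¹; g 1 0 * u, g 1 1 * (u : F)⁻¹] := by
  ext i j; fin_cases i <;> fin_cases j <;> simp [coe_upper, Matrix.mul_apply]

theorem exists_upper_eq (g : SL(2, F)) (hg : g 1 0 = 0) : ∃ u, upper u (g 0 1) = g := by
  have hdet := det_eq_one g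
  rw [hg, mul_zero, sub_zero] at hdet
  refine ⟨Units.mk0 (g 0 0) (left_ne_zero_of_mul_eq_one hdet), ?_⟩
  ext i j; fin_cases i <;> fin_cases j <;> simp [coe_upper, hg, eq_inv_of_mul_eq_one_right hdet]

def bigCell (a c d : Fˣ) : SL(2, F) :=
  ⟨!![a, (a * d - 1) / c; c, d], by simp [Matrix.det_fin_two_of]⟩

theorem coe_bigCell (a c d : Fˣ) :
    ((bigCell a c d : SL(2, F)) : Matrix (Fin 2) (Fin 2) F)
      = !![(a : F), (a * d - 1) / c; (c : F), d] := rfl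

theorem bigCell_injective :
    Function.Injective fun t : Fˣ × Fˣ × Fˣ => bigCell t.1 t.2.1 t.2.2 := by
  rintro ⟨a, c, d⟩ ⟨a', c', d'⟩ h
  have h00 := congr_arg (fun g : SL(2, F) => g 0 0) h
  have h10 := congr_arg (fun g : SL(2, F) => g 1 0) h
  have h11 := congr_arg (fun g : SL(2, F) => g 1 1) h
  simp only [coe_bigCell] at h00 h10 h11
  simp_all [Units.ext_iff]

theorem exists_bigCell_eq (g : SL(2, F)) (h00 : g 0 0 ≠ 0) (h10 : g 1 0 ≠ 0)
    (h11 : g 1 1 ≠ 0) : ∃ a c d, bigCell a c d = g := by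
  refine ⟨Units.mk0 _ h00, Units.mk0 _ h10, Units.mk0 _ h11, ?_⟩
  have hdet := det_eq_one g
  ext i j; fin_cases i <;> fin_cases j <;> simp [coe_bigCell]
  · field_simp
    linear_combination hdet

theorem upper_mul_weyl_mul_upper (u v u' v' : Fˣ) :
    upper u v * weyl * upper u' v' = bigCell (v * u') (u' / u) (v' / u) := by
  ext i j; fin_cases i <;> fin_cases j <;>
    simp [coe_upper, coe_weyl, coe_bigCell, Matrix.mul_apply, div_eq_inv_mul]
  field_simp
  ring

variable (F) in
def upperWeylUpperEquiv : (Fˣ × Fˣ) × (Fˣ × Fˣ) ≃ (Fˣ × Fˣ × Fˣ) × Fˣ where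
  toFun x := ((x.1.2 * x.2.1, x.2.1 / x.1.1, x.2.2 / x.1.1), x.1.1)
  invFun y := ((y.2, y.1.1 / (y.1.2.1 * y.2)), (y.1.2.1 * y.2, y.1.2.2 * y.2))
  left_inv := by rintro ⟨⟨u, v⟩, u', v'⟩; simp
  right_inv := by rintro ⟨⟨a, c, d⟩, u⟩; simp

variable [Fintype F] [DecidableEq F]

theorem card_units_eq_card_sub_one : (Fintype.card Fˣ : ℤ) = Fintype.card F - 1 := by
  rw [Fintype.card_units, Nat.cast_sub Fintype.card_pos, Nat.cast_one]

instance : DecidablePred (· ∈ (borel : Subgroup SL(2, F))) :=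
  fun g => inferInstanceAs (Decidable (g 1 0 = 0))

abbrev HasSupport (b₁₁ b₁₂ b₂₁ b₂₂ : Bool) (g : SL(2, F)) : Prop :=
  (b₁₁ = true ↔ g 0 0 ≠ 0) ∧ (b₁₂ = true ↔ g 0 1 ≠ 0) ∧
    (b₂₁ = true ↔ g 1 0 ≠ 0) ∧ (b₂₂ = true ↔ g 1 1 ≠ 0)

theorem filter_hasSupport_diag :
    univ.filter (HasSupport true false false true) = univ.image fun u : Fˣ => upper u 0 := by
  ext g
  simp only [mem_filter, mem_univ, true_and, mem_image]
  constructor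
  · rintro ⟨-, h01, h10, -⟩
    simp only [Bool.false_eq_true, false_iff, not_not] at h01 h10
    simpa [h01] using exists_upper_eq g h10
  · rintro ⟨u, rfl⟩
    simp [HasSupport, coe_upper]

theorem filter_hasSupport_upper :
    univ.filter (HasSupport true true false true)
      = univ.image fun p : Fˣ × Fˣ => upper p.1 p.2 := by
  ext g
  simp only [mem_filter, mem_univ, true_and, mem_image]
  constructor
  · rintro ⟨-, h01, h10, -⟩
    simp only [Bool.false_eq_true, false_iff, not_not, true_iff] at h01 h10
    obtain ⟨u, hu⟩ := exists_upper_eq g h10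
    exact ⟨(u, Units.mk0 _ h01), hu⟩
  · rintro ⟨p, rfl⟩
    simp [HasSupport, coe_upper]

theorem filter_mem_borel :
    univ.filter (· ∈ (borel : Subgroup SL(2, F)))
      = (univ.filter (HasSupport true false false true)).disjUnion
        (univ.filter (HasSupport true true false true))
      (disjoint_filter.2 fun _ _ h h' => Bool.false_ne_true (h.2.1.2 (h'.2.1.1 rfl))) := by
  ext g
  have hdet := det_eq_one g
  simp only [borel, Subgroup.mem_mk, Submonoid.mem_mk, Subsemigroup.mem_mk, Set.mem_ofPred_eq,
    mem_filter, mem_univ, true_and, mem_disjUnion]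
  by_cases h10 : g 1 0 = 0
  · rw [h10, mul_zero, sub_zero] at hdet
    have := left_ne_zero_of_mul_eq_one hdet
    have := right_ne_zero_of_mul_eq_one hdet
    by_cases h01 : g 0 1 = 0 <;> simp_all [HasSupport]
  · simp [HasSupport, h10]

theorem filter_hasSupport_C_disjUnion_Dm :
    (univ.filter (HasSupport true true true true)).disjUnion
      (univ.filter (HasSupport true false true true))
      (disjoint_filter.2 fun _ _ h h' => Bool.false_ne_true (h'.2.1.2 (h.2.1.1 rfl)))
      = univ.image fun t : Fˣ × Fˣ × Fˣ => bigCell t.1 t.2.1 t.2.2 := by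
  ext g
  simp only [mem_disjUnion, mem_filter, mem_univ, true_and, mem_image, Prod.exists]
  constructor
  · rintro (⟨h00, -, h10, h11⟩ | ⟨h00, -, h10, h11⟩) <;>
      exact exists_bigCell_eq g (h00.1 rfl) (h10.1 rfl) (h11.1 rfl)
  · rintro ⟨a, c, d, rfl⟩
    by_cases h : (a * d - 1 : F) = 0 <;> simp [HasSupport, coe_bigCell, h]

theorem card_filter_hasSupport_diag :
    #(univ.filter (HasSupport true false false true : SL(2, F) → Prop)) = Fintype.card Fˣ := by
  rw [filter_hasSupport_diag, card_image_of_injective _ fun u u' h => (upper_inj.1 h).1, card_univ]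

theorem card_filter_hasSupport_upper :
    #(univ.filter (HasSupport true true false true : SL(2, F) → Prop))
      = Fintype.card Fˣ * Fintype.card Fˣ := by
  rw [filter_hasSupport_upper, card_image_of_injective _ fun p p' h =>
    Prod.ext (upper_inj.1 h).1 (Units.ext (upper_inj.1 h).2), card_univ, Fintype.card_prod]

variable (R : Type*) [CommRing R]

local notation "w" => of R SL(2, F) weyl

theorem suppClass_eq (b₁₁ b₁₂ b₂₁ b₂₂ : Bool) :
    suppClass R F b₁₁ b₁₂ b₂₁ b₂₂
      = ∑ g ∈ univ.filter (HasSupport b₁₁ b₁₂ b₂₁ b₂₂), of R SL(2, F) g := rfl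

theorem weyl_mul_suppClass (b₁₁ b₁₂ b₂₁ b₂₂ : Bool) :
    w * suppClass R F b₁₁ b₁₂ b₂₁ b₂₂ = suppClass R F b₂₁ b₂₂ b₁₁ b₁₂ := by
  refine of_mul_sum_filter_of _ fun g => ?_
  simp only [coe_weyl_mul, Matrix.of_apply, Matrix.cons_val', Matrix.cons_val_zero,
    Matrix.cons_val_one, Matrix.cons_val_fin_one, ne_eq, neg_eq_zero]
  tauto

theorem suppClass_mul_weyl (b₁₁ b₁₂ b₂₁ b₂₂ : Bool) :
    suppClass R F b₁₁ b₁₂ b₂₁ b₂₂ * w = suppClass R F b₁₂ b₁₁ b₂₂ b₂₁ := by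
  refine sum_filter_of_mul_of _ fun g => ?_
  simp only [coe_mul_weyl, Matrix.of_apply, Matrix.cons_val', Matrix.cons_val_zero,
    Matrix.cons_val_one, Matrix.cons_val_fin_one, ne_eq, neg_eq_zero]
  tauto

theorem elA_mul_weyl : elA R F * w = elB R F := suppClass_mul_weyl ..
theorem weyl_mul_elA : w * elA R F = elB R F := weyl_mul_suppClass ..
theorem elC_mul_weyl : elC R F * w = elC R F := suppClass_mul_weyl ..
theorem weyl_mul_elC : w * elC R F = elC R F := weyl_mul_suppClass ..
theorem elDp_mul_weyl : elDp R F * w = elEp R F := suppClass_mul_weyl ..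
theorem weyl_mul_elDp : w * elDp R F = elEm R F := weyl_mul_suppClass ..
theorem elDm_mul_weyl : elDm R F * w = elEm R F := suppClass_mul_weyl ..
theorem weyl_mul_elDm : w * elDm R F = elEp R F := weyl_mul_suppClass ..
theorem elEp_mul_weyl : elEp R F * w = elDp R F := suppClass_mul_weyl ..
theorem weyl_mul_elEp : w * elEp R F = elDm R F := weyl_mul_suppClass ..

theorem upper_zero_mul_suppClass (u : Fˣ) (b₁₁ b₁₂ b₂₁ b₂₂ : Bool) :
    of R SL(2, F) (upper u 0) * suppClass R F b₁₁ b₁₂ b₂₁ b₂₂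
      = suppClass R F b₁₁ b₁₂ b₂₁ b₂₂ :=
  of_mul_sum_filter_of _ fun g => by simp only [coe_upper_zero_mul]; simp

theorem suppClass_mul_upper_zero (u : Fˣ) (b₁₁ b₁₂ b₂₁ b₂₂ : Bool) :
    suppClass R F b₁₁ b₁₂ b₂₁ b₂₂ * of R SL(2, F) (upper u 0)
      = suppClass R F b₁₁ b₁₂ b₂₁ b₂₂ :=
  sum_filter_of_mul_of _ fun g => by simp only [coe_mul_upper_zero]; simp

theorem elA_eq_sum : elA R F = ∑ u : Fˣ, of R SL(2, F) (upper u 0) := by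
  rw [elA, suppClass_eq, filter_hasSupport_diag, sum_image fun u _ u' _ h => (upper_inj.1 h).1]

theorem elA_mul_suppClass (b₁₁ b₁₂ b₂₁ b₂₂ : Bool) :
    elA R F * suppClass R F b₁₁ b₁₂ b₂₁ b₂₂
      = Fintype.card Fˣ • suppClass R F b₁₁ b₁₂ b₂₁ b₂₂ := by
  rw [elA_eq_sum, sum_mul]
  simp only [upper_zero_mul_suppClass, sum_const, card_univ]

theorem suppClass_mul_elA (b₁₁ b₁₂ b₂₁ b₂₂ : Bool) :
    suppClass R F b₁₁ b₁₂ b₂₁ b₂₂ * elA R F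
      = Fintype.card Fˣ • suppClass R F b₁₁ b₁₂ b₂₁ b₂₂ := by
  rw [elA_eq_sum, mul_sum]
  simp only [suppClass_mul_upper_zero, sum_const, card_univ]

theorem sum_borel :
    ∑ g ∈ univ.filter (· ∈ (borel : Subgroup SL(2, F))), of R SL(2, F) g
      = elA R F + elDp R F := by
  rw [filter_mem_borel, sum_disjUnion]
  rfl

theorem card_filter_mem_borel : #(univ.filter (· ∈ (borel : Subgroup SL(2, F))))
    = Fintype.card Fˣ + Fintype.card Fˣ * Fintype.card Fˣ := by
  rw [filter_mem_borel, card_disjUnion, card_filter_hasSupport_diag, card_filter_hasSupport_upper]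

theorem elDp_mul_elDp :
    elDp R F * elDp R F = ((Fintype.card F - 1 : ℤ) ^ 2) • elA R F
      + ((Fintype.card F - 1 : ℤ) * (Fintype.card F - 2)) • elDp R F := by
  have hBorel := sum_subgroup_mul_self (k := R) (borel : Subgroup SL(2, F))
  have hAA : elA R F * elA R F = Fintype.card Fˣ • elA R F := elA_mul_suppClass ..
  have hAD : elA R F * elDp R F = Fintype.card Fˣ • elDp R F := elA_mul_suppClass ..
  have hDA : elDp R F * elA R F = Fintype.card Fˣ • elDp R F := suppClass_mul_elA ..
  rw [sum_borel, card_filter_mem_borel, add_mul, mul_add, mul_add, hAA, hAD, hDA] at hBorel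
  simp only [← Nat.cast_smul_eq_nsmul ℤ, Nat.cast_add, Nat.cast_mul,
    card_units_eq_card_sub_one] at hBorel
  linear_combination (norm := module) hBorel

theorem elDp_eq_sum : elDp R F = ∑ p : Fˣ × Fˣ, of R SL(2, F) (upper p.1 p.2) := by
  rw [elDp, suppClass_eq, filter_hasSupport_upper, sum_image fun p _ p' _ h =>
    Prod.ext (upper_inj.1 h).1 (Units.ext (upper_inj.1 h).2)]

theorem elC_add_elDm_eq_sum :
    elC R F + elDm R F = ∑ t : Fˣ × Fˣ × Fˣ, of R SL(2, F) (bigCell t.1 t.2.1 t.2.2) := by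
  rw [← sum_image bigCell_injective.injOn, ← filter_hasSupport_C_disjUnion_Dm, sum_disjUnion]
  rfl

theorem elEp_mul_elDp :
    elEp R F * elDp R F = (Fintype.card F - 1 : ℤ) • (elC R F + elDm R F) := by
  calc elEp R F * elDp R F
      = ∑ x : (Fˣ × Fˣ) × (Fˣ × Fˣ),
          of R SL(2, F) (upper x.1.1 x.1.2 * weyl * upper x.2.1 x.2.2) := by
        rw [← elDp_mul_weyl, elDp_eq_sum, sum_mul, sum_mul_sum, ← Fintype.sum_prod_type']
        simp only [map_mul]
    _ = ∑ y : (Fˣ × Fˣ × Fˣ) × Fˣ, of R SL(2, F) (bigCell y.1.1 y.1.2.1 y.1.2.2) := by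
        simp only [upper_mul_weyl_mul_upper]
        exact Equiv.sum_comp (upperWeylUpperEquiv F) fun y =>
          of R SL(2, F) (bigCell y.1.1 y.1.2.1 y.1.2.2)
    _ = (Fintype.card F - 1 : ℤ) • (elC R F + elDm R F) := by
        rw [Fintype.sum_prod_type_right, elC_add_elDm_eq_sum]
        simp only [sum_const, card_univ, ← Nat.cast_smul_eq_nsmul ℤ, card_units_eq_card_sub_one]

theorem elDp_mul_elEp : elDp R F * elEp R F = ((Fintype.card F - 1 : ℤ) ^ 2) • elB R F
    + ((Fintype.card F - 1 : ℤ) * (Fintype.card F - 2)) • elEp R F := calc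
  elDp R F * elEp R F = elDp R F * elDp R F * w := by rw [mul_assoc, elDp_mul_weyl]
  _ = _ := by
    rw [elDp_mul_elDp, add_mul, smul_mul_assoc, smul_mul_assoc, elA_mul_weyl, elDp_mul_weyl]

theorem elEm_mul_elDp : elEm R F * elDp R F = ((Fintype.card F - 1 : ℤ) ^ 2) • elB R F
    + ((Fintype.card F - 1 : ℤ) * (Fintype.card F - 2)) • elEm R F := calc
  elEm R F * elDp R F = w * (elDp R F * elDp R F) := by rw [← mul_assoc, weyl_mul_elDp]
  _ = _ := by
    rw [elDp_mul_elDp, mul_add, mul_smul_comm, mul_smul_comm, weyl_mul_elA, weyl_mul_elDp]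

theorem elDm_mul_elEp :
    elDm R F * elEp R F = (Fintype.card F - 1 : ℤ) • (elC R F + elDp R F) := calc
  elDm R F * elEp R F = w * (elEp R F * elDp R F) * w := by
    rw [mul_assoc, mul_assoc, elDp_mul_weyl, ← mul_assoc, weyl_mul_elEp]
  _ = _ := by
    rw [elEp_mul_elDp, mul_smul_comm, smul_mul_assoc, mul_add, add_mul, weyl_mul_elC,
      elC_mul_weyl, weyl_mul_elDm, elEp_mul_weyl]

theorem elEp_mul_elDm : elEp R F * elDm R F = elDp R F * elEp R F := calc
  elEp R F * elDm R F = elDp R F * w * elDm R F := by rw [elDp_mul_weyl]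
  _ = _ := by rw [mul_assoc, weyl_mul_elDm]

theorem elDm_mul_elEm : elDm R F * elEm R F = elEm R F * elDp R F := calc
  elDm R F * elEm R F = elDm R F * (w * elDp R F) := by rw [weyl_mul_elDp]
  _ = _ := by rw [← mul_assoc, elDm_mul_weyl]

theorem elDp_mul_elEm : elDp R F * elEm R F = elEp R F * elDp R F := calc
  elDp R F * elEm R F = elDp R F * (w * elDp R F) := by rw [weyl_mul_elDp]
  _ = _ := by rw [← mul_assoc, elDp_mul_weyl]

theorem elEm_mul_elDm : elEm R F * elDm R F = elDm R F * elEp R F := calc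
  elEm R F * elDm R F = elDm R F * w * elDm R F := by rw [elDm_mul_weyl]
  _ = _ := by rw [mul_assoc, weyl_mul_elDm]

end SL2

open SL2 in
theorem elD_mul_elE_general (F : Type*) [Field F] [Fintype F] [DecidableEq F]
    (q : ℤ) (hqc : q = Fintype.card F) :
    elDp ℤ F * elEp ℤ F = (q - 1) ^ 2 • elB ℤ F + ((q - 1) * (q - 2)) • elEp ℤ F ∧
    elEp ℤ F * elDm ℤ F = (q - 1) ^ 2 • elB ℤ F + ((q - 1) * (q - 2)) • elEp ℤ F ∧
    elEm ℤ F * elDp ℤ F = (q - 1) ^ 2 • elB ℤ F + ((q - 1) * (q - 2)) • elEm ℤ F ∧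
    elDm ℤ F * elEm ℤ F = (q - 1) ^ 2 • elB ℤ F + ((q - 1) * (q - 2)) • elEm ℤ F ∧
    elEp ℤ F * elDp ℤ F = (q - 1) • (elC ℤ F + elDm ℤ F) ∧
    elDp ℤ F * elEm ℤ F = (q - 1) • (elC ℤ F + elDm ℤ F) ∧
    elDm ℤ F * elEp ℤ F = (q - 1) • (elC ℤ F + elDp ℤ F) ∧
    elEm ℤ F * elDm ℤ F = (q - 1) • (elC ℤ F + elDp ℤ F) := by
  subst hqc
  rw [elEp_mul_elDm, elDm_mul_elEm, elDp_mul_elEm, elEm_mul_elDm]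
  exact ⟨elDp_mul_elEp .., elDp_mul_elEp .., elEm_mul_elDp .., elEm_mul_elDp ..,
    elEp_mul_elDp .., elEp_mul_elDp .., elDm_mul_elEp .., elDm_mul_elEp ..⟩

theorem elD_mul_elE (F : Type*) [Field F] [Fintype F] [DecidableEq F]
    (hq : 2 < Fintype.card F) (q : ℤ) (hqc : q = Fintype.card F) :
    elDp ℤ F * elEp ℤ F = (q - 1) ^ 2 • elB ℤ F + ((q - 1) * (q - 2)) • elEp ℤ F ∧
    elEp ℤ F * elDm ℤ F = (q - 1) ^ 2 • elB ℤ F + ((q - 1) * (q - 2)) • elEp ℤ F ∧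
    elEm ℤ F * elDp ℤ F = (q - 1) ^ 2 • elB ℤ F + ((q - 1) * (q - 2)) • elEm ℤ F ∧
    elDm ℤ F * elEm ℤ F = (q - 1) ^ 2 • elB ℤ F + ((q - 1) * (q - 2)) • elEm ℤ F ∧
    elEp ℤ F * elDp ℤ F = (q - 1) • (elC ℤ F + elDm ℤ F) ∧
    elDp ℤ F * elEm ℤ F = (q - 1) • (elC ℤ F + elDm ℤ F) ∧
    elDm ℤ F * elEp ℤ F = (q - 1) • (elC ℤ F + elDp ℤ F) ∧
    elEm ℤ F * elDm ℤ F = (q - 1) • (elC ℤ F + elDp ℤ F) :=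
  elD_mul_elE_general F q hqc
end

section
/- In ℚ[SL₂(F)], the idempotent π₂ induces a character of the support-class algebra with values A ↦ q−1, B ↦ q−1, C ↦ 2(q−1), D₊ ↦ 1−q, D₋ ↦ 1−q, E₊ ↦ 1−q, E₋ ↦ 1−q; concretely: A·π₂ = (q−1)·π₂, B·π₂ = (q−1)·π₂, C·π₂ = 2(q−1)·π₂, D₊·π₂ = (1−q)·π₂, D₋·π₂ = (1−q)·π₂, E₊·π₂ = (1−q)·π₂, and E₋·π₂ = (1−q)·π₂. -/
open MonoidAlgebra

/-!
Left multiplication by a diagonal matrix preserves every support class, and left multiplication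
by `w = !![0, 1; -1, 0]` swaps the two rows of the support pattern; hence `π₂` is fixed by the
torus `T` and by `w`, so `A π₂ = |T| π₂ = (q - 1) π₂` and `B π₂ = w A π₂ = (q - 1) π₂`.

The unipotent sum `N = ∑ₓ [1, x; 0, 1]` annihilates `π₂`. Left multiplication by `N` changes
only the top row, and the classes `A`, `B`, `D₋`, `E₋` are sections of this action: every matrix
with bottom row `(c, d)`, `d ≠ 0` (resp. `c ≠ 0`), is uniquely `[1, x; 0, 1]` times a matrix with
top-right (resp. top-left) entry zero. This computes `N S` for every class `S`, and the coefficients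
of `π₂` are exactly those for which `N π₂` cancels.

Finally `D₊ = N A - A`, `E₊ = N B - B`, `C = N D₋ - D₋ - E₋`, `E₋ = w D₊` and `D₋ = w E₊`, which
gives the remaining eigenvalues from those of `A`, `B`, `N` and `w`.
-/

namespace MonoidAlgebra

variable {k G : Type*} [CommSemiring k] [Group G]

lemma of_mul_sum_of_eq_sum_of {s t : Finset G} (g₀ : G) (h : ∀ g, g ∈ s ↔ g₀ * g ∈ t) :
    of k G g₀ * ∑ g ∈ s, of k G g = ∑ g ∈ t, of k G g := by
  rw [Finset.mul_sum]
  exact Finset.sum_equiv (Equiv.mulLeft g₀) h fun g _ ↦ (map_mul _ _ _).symm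

lemma sum_of_mul_sum_of_eq_sum_of {ι : Type*} [Fintype ι] [DecidableEq ι] (u : ι → G)
    (φ : G → ι) {s t : Finset G} (h : ∀ i g, (u i)⁻¹ * g ∈ s ↔ g ∈ t ∧ φ g = i) :
    (∑ i, of k G (u i)) * ∑ g ∈ s, of k G g = ∑ g ∈ t, of k G g := by
  rw [Finset.sum_mul, ← Finset.sum_fiberwise t φ]
  refine Finset.sum_congr rfl fun i _ ↦ of_mul_sum_of_eq_sum_of _ fun g ↦ ?_
  simpa using h i (u i * g)

lemma sum_of_addChar_mul_self {A : Type*} [AddGroup A] [Fintype A] (ψ : AddChar A G) :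
    (∑ a, of k G (ψ a)) * ∑ a, of k G (ψ a) = Fintype.card A • ∑ a, of k G (ψ a) := by
  have hψ (b : A) : (∑ a, of k G (ψ a)) * of k G (ψ b) = ∑ a, of k G (ψ a) := by
    rw [Finset.sum_mul]
    exact Fintype.sum_equiv (Equiv.addRight b) _ _ fun a ↦ by simp [AddChar.map_add_eq_mul]
  rw [Finset.mul_sum, Finset.sum_congr rfl fun b _ ↦ hψ b, Finset.sum_const, Finset.card_univ]

end MonoidAlgebra

open scoped MatrixGroups

namespace SL2

section CommRing

variable {R S : Type*} [CommRing R] [CommRing S]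

lemma mul_apply_fin_two (g h : SL(2, S)) (i j : Fin 2) :
    (g * h) i j = g i 0 * h 0 j + g i 1 * h 1 j := by
  simp [Matrix.SpecialLinearGroup.coe_mul, Matrix.mul_apply, Fin.sum_univ_two]

lemma det_fin_two_eq_one (g : SL(2, S)) : g 0 0 * g 1 1 - g 0 1 * g 1 0 = 1 := by
  rw [← Matrix.det_fin_two]
  exact g.det_coe

def diagonalOfUnit (a : Sˣ) : SL(2, S) :=
  ⟨!![(a : S), 0; 0, ((a⁻¹ : Sˣ) : S)], by simp [Matrix.det_fin_two]⟩

@[simp] lemma diagonalOfUnit_apply (a : Sˣ) (i j : Fin 2) :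
    diagonalOfUnit a i j = !![(a : S), 0; 0, ((a⁻¹ : Sˣ) : S)] i j := rfl

def weylElement : SL(2, S) :=
  ⟨!![0, 1; -1, 0], by simp [Matrix.det_fin_two]⟩

def upperUnipotent : AddChar S SL(2, S) where
  toFun x := ⟨!![1, x; 0, 1], by simp [Matrix.det_fin_two]⟩
  map_zero_eq_one' := by ext i j; fin_cases i <;> fin_cases j <;> rfl
  map_add_eq_mul' x y := Subtype.ext <|
    show !![1, x + y; 0, 1] = !![1, x; 0, 1] * !![1, y; 0, 1] by simp [add_comm]

@[simp] lemma upperUnipotent_apply (x : S) (i j : Fin 2) :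
    upperUnipotent x i j = (!![1, x; 0, 1] : Matrix (Fin 2) (Fin 2) S) i j := rfl

@[simp] lemma upperUnipotent_inv_mul_apply_zero (x : S) (g : SL(2, S)) (j : Fin 2) :
    ((upperUnipotent x)⁻¹ * g) 0 j = g 0 j - x * g 1 j := by
  rw [← AddChar.map_neg_eq_inv, mul_apply_fin_two]
  simp [sub_eq_add_neg]

@[simp] lemma upperUnipotent_inv_mul_apply_one (x : S) (g : SL(2, S)) (j : Fin 2) :
    ((upperUnipotent x)⁻¹ * g) 1 j = g 1 j := by
  rw [← AddChar.map_neg_eq_inv, mul_apply_fin_two]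
  simp

variable (R S) in
noncomputable def unipotentSum [Fintype S] : MonoidAlgebra R SL(2, S) :=
  ∑ x, of R SL(2, S) (upperUnipotent x)

lemma unipotentSum_mul_self [Fintype S] :
    unipotentSum R S * unipotentSum R S = Fintype.card S • unipotentSum R S :=
  sum_of_addChar_mul_self _

end CommRing

variable {R : Type*} [CommRing R] {F : Type*} [Field F] [Fintype F] [DecidableEq F]

def supportSet (b₁₁ b₁₂ b₂₁ b₂₂ : Bool) : Finset SL(2, F) :=
  {g | (b₁₁ = true ↔ g 0 0 ≠ 0) ∧ (b₁₂ = true ↔ g 0 1 ≠ 0) ∧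
    (b₂₁ = true ↔ g 1 0 ≠ 0) ∧ (b₂₂ = true ↔ g 1 1 ≠ 0)}

@[simp] lemma mem_supportSet {b₁₁ b₁₂ b₂₁ b₂₂ : Bool} {g : SL(2, F)} :
    g ∈ supportSet b₁₁ b₁₂ b₂₁ b₂₂ ↔ (b₁₁ = true ↔ g 0 0 ≠ 0) ∧ (b₁₂ = true ↔ g 0 1 ≠ 0) ∧
      (b₂₁ = true ↔ g 1 0 ≠ 0) ∧ (b₂₂ = true ↔ g 1 1 ≠ 0) := by
  simp [supportSet]

lemma suppClass_eq_sum (b₁₁ b₁₂ b₂₁ b₂₂ : Bool) :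
    suppClass R F b₁₁ b₁₂ b₂₁ b₂₂ = ∑ g ∈ supportSet b₁₁ b₁₂ b₂₁ b₂₂, of R SL(2, F) g := rfl

lemma suppClass_eq_zero {b₁₁ b₁₂ b₂₁ b₂₂ : Bool} (h : (b₁₁ && b₂₂ || b₁₂ && b₂₁) = false) :
    suppClass R F b₁₁ b₁₂ b₂₁ b₂₂ = 0 := by
  rw [suppClass_eq_sum]
  refine Finset.sum_eq_zero fun g hg ↦ absurd (det_fin_two_eq_one g) ?_
  rw [mem_supportSet] at hg
  cases b₁₁ <;> cases b₁₂ <;> cases b₂₁ <;> cases b₂₂ <;> simp_all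

lemma of_mul_suppClass_of_diag {t : SL(2, F)} (h₀₁ : t 0 1 = 0) (h₁₀ : t 1 0 = 0)
    (b₁₁ b₁₂ b₂₁ b₂₂ : Bool) :
    of R SL(2, F) t * suppClass R F b₁₁ b₁₂ b₂₁ b₂₂ = suppClass R F b₁₁ b₁₂ b₂₁ b₂₂ := by
  have hdet := det_fin_two_eq_one t
  have h₀₀ : t 0 0 ≠ 0 := by intro h; simp [h, h₁₀] at hdet
  have h₁₁ : t 1 1 ≠ 0 := by intro h; simp [h, h₁₀] at hdet
  refine of_mul_sum_of_eq_sum_of t fun g ↦ ?_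
  simp [mul_apply_fin_two, h₀₁, h₁₀, h₀₀, h₁₁]

lemma of_mul_suppClass_of_antidiag {t : SL(2, F)} (h₀₀ : t 0 0 = 0) (h₁₁ : t 1 1 = 0)
    (b₁₁ b₁₂ b₂₁ b₂₂ : Bool) :
    of R SL(2, F) t * suppClass R F b₁₁ b₁₂ b₂₁ b₂₂ = suppClass R F b₂₁ b₂₂ b₁₁ b₁₂ := by
  have hdet := det_fin_two_eq_one t
  have h₀₁ : t 0 1 ≠ 0 := by intro h; simp [h, h₀₀] at hdet
  have h₁₀ : t 1 0 ≠ 0 := by intro h; simp [h, h₀₀] at hdet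
  rw [suppClass_eq_sum, suppClass_eq_sum]
  refine of_mul_sum_of_eq_sum_of t fun g ↦ ?_
  simp only [mem_supportSet, mul_apply_fin_two, h₀₀, h₁₁, zero_mul, zero_add, add_zero, ne_eq,
    mul_eq_zero, h₀₁, h₁₀, false_or]
  tauto

lemma of_weylElement_mul_suppClass (b₁₁ b₁₂ b₂₁ b₂₂ : Bool) :
    of R SL(2, F) weylElement * suppClass R F b₁₁ b₁₂ b₂₁ b₂₂ = suppClass R F b₂₁ b₂₂ b₁₁ b₁₂ :=
  of_mul_suppClass_of_antidiag rfl rfl _ _ _ _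

lemma card_supportSet_diag :
    (supportSet true false false true : Finset SL(2, F)).card = Fintype.card F - 1 := by
  rw [← Fintype.card_units, ← Finset.card_univ]
  refine (Finset.card_bij (fun a _ ↦ diagonalOfUnit a) (fun a _ ↦ by simp) (fun a _ b _ h ↦ ?_)
    (fun g hg ↦ ?_)).symm
  · simpa [Units.ext_iff] using congr_arg (fun g : SL(2, F) ↦ g 0 0) h
  · obtain ⟨h₀₀, h₀₁, h₁₀, -⟩ : g 0 0 ≠ 0 ∧ g 0 1 = 0 ∧ g 1 0 = 0 ∧ g 1 1 ≠ 0 := by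
      simpa using hg
    have hdet := det_fin_two_eq_one g
    rw [h₀₁, zero_mul, sub_zero] at hdet
    refine ⟨Units.mk0 _ h₀₀, Finset.mem_univ _, ?_⟩
    ext i j
    fin_cases i <;> fin_cases j <;> simp [h₀₁, h₁₀, inv_eq_of_mul_eq_one_right hdet]

lemma elA_mul_of_forall_diag {X : MonoidAlgebra R SL(2, F)}
    (hX : ∀ t : SL(2, F), t 0 1 = 0 → t 1 0 = 0 → of R SL(2, F) t * X = X) :
    elA R F * X = (Fintype.card F - 1 : R) • X := by
  rw [elA, suppClass_eq_sum, Finset.sum_mul,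
    Finset.sum_congr rfl fun t ht ↦ hX t (by simp_all) (by simp_all), Finset.sum_const,
    card_supportSet_diag, ← Nat.cast_smul_eq_nsmul R, Nat.cast_pred Fintype.card_pos]

def bottomRowSet (b₂₁ b₂₂ : Bool) : Finset SL(2, F) :=
  {g | (b₂₁ = true ↔ g 1 0 ≠ 0) ∧ (b₂₂ = true ↔ g 1 1 ≠ 0)}

@[simp] lemma mem_bottomRowSet {b₂₁ b₂₂ : Bool} {g : SL(2, F)} :
    g ∈ bottomRowSet b₂₁ b₂₂ ↔ (b₂₁ = true ↔ g 1 0 ≠ 0) ∧ (b₂₂ = true ↔ g 1 1 ≠ 0) := by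
  simp [bottomRowSet]

variable (R F) in
noncomputable def bottomRowClass (b₂₁ b₂₂ : Bool) : MonoidAlgebra R SL(2, F) :=
  ∑ g ∈ bottomRowSet b₂₁ b₂₂, of R SL(2, F) g

lemma bottomRowClass_eq_sum (b₂₁ b₂₂ : Bool) :
    bottomRowClass R F b₂₁ b₂₂ = ∑ b₁₁ : Bool, ∑ b₁₂ : Bool, suppClass R F b₁₁ b₁₂ b₂₁ b₂₂ := by
  rw [bottomRowClass, ← Finset.sum_fiberwise _ fun g : SL(2, F) ↦
    (decide (g 0 0 ≠ 0), decide (g 0 1 ≠ 0)), Fintype.sum_prod_type]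
  refine Fintype.sum_congr _ _ fun b₁₁ ↦ Fintype.sum_congr _ _ fun b₁₂ ↦
    Finset.sum_congr ?_ fun _ _ ↦ rfl
  ext g
  simp only [Finset.mem_filter, Finset.mem_univ, true_and, mem_bottomRowSet, Prod.mk.injEq]
  grind

lemma bottomRowClass_false_true : bottomRowClass R F false true = elA R F + elDp R F := by
  simp [bottomRowClass_eq_sum, suppClass_eq_zero, elA, elDp, add_comm]

lemma bottomRowClass_true_false : bottomRowClass R F true false = elB R F + elEp R F := by
  simp [bottomRowClass_eq_sum, suppClass_eq_zero, elB, elEp, add_comm]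

lemma bottomRowClass_true_true :
    bottomRowClass R F true true = elDm R F + elEm R F + elC R F := by
  simp [bottomRowClass_eq_sum, suppClass_eq_zero, elDm, elEm, elC, add_comm, add_left_comm]

lemma unipotentSum_mul_elA : unipotentSum R F * elA R F = bottomRowClass R F false true := by
  rw [elA, suppClass_eq_sum]
  refine sum_of_mul_sum_of_eq_sum_of _ (fun g ↦ g 0 1 / g 1 1) fun x g ↦ ?_
  grind [det_fin_two_eq_one, mem_supportSet, mem_bottomRowSet, upperUnipotent_inv_mul_apply_zero,
    upperUnipotent_inv_mul_apply_one]

lemma unipotentSum_mul_elB : unipotentSum R F * elB R F = bottomRowClass R F true false := by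
  rw [elB, suppClass_eq_sum]
  refine sum_of_mul_sum_of_eq_sum_of _ (fun g ↦ g 0 0 / g 1 0) fun x g ↦ ?_
  grind [det_fin_two_eq_one, mem_supportSet, mem_bottomRowSet, upperUnipotent_inv_mul_apply_zero,
    upperUnipotent_inv_mul_apply_one]

lemma unipotentSum_mul_elDm : unipotentSum R F * elDm R F = bottomRowClass R F true true := by
  rw [elDm, suppClass_eq_sum]
  refine sum_of_mul_sum_of_eq_sum_of _ (fun g ↦ g 0 1 / g 1 1) fun x g ↦ ?_
  grind [det_fin_two_eq_one, mem_supportSet, mem_bottomRowSet, upperUnipotent_inv_mul_apply_zero,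
    upperUnipotent_inv_mul_apply_one]

lemma unipotentSum_mul_elEm : unipotentSum R F * elEm R F = bottomRowClass R F true true := by
  rw [elEm, suppClass_eq_sum]
  refine sum_of_mul_sum_of_eq_sum_of _ (fun g ↦ g 0 0 / g 1 0) fun x g ↦ ?_
  grind [det_fin_two_eq_one, mem_supportSet, mem_bottomRowSet, upperUnipotent_inv_mul_apply_zero,
    upperUnipotent_inv_mul_apply_one]

lemma elDp_eq_unipotentSum_mul_elA_sub : elDp R F = unipotentSum R F * elA R F - elA R F := by
  rw [unipotentSum_mul_elA, bottomRowClass_false_true, add_sub_cancel_left]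

lemma elEp_eq_unipotentSum_mul_elB_sub : elEp R F = unipotentSum R F * elB R F - elB R F := by
  rw [unipotentSum_mul_elB, bottomRowClass_true_false, add_sub_cancel_left]

lemma elC_eq_unipotentSum_mul_elDm_sub :
    elC R F = unipotentSum R F * elDm R F - elDm R F - elEm R F := by
  rw [unipotentSum_mul_elDm, bottomRowClass_true_true]
  abel

lemma unipotentSum_mul_elDp :
    unipotentSum R F * elDp R F = (Fintype.card F - 1 : R) • bottomRowClass R F false true := by
  rw [elDp_eq_unipotentSum_mul_elA_sub, mul_sub, ← mul_assoc, unipotentSum_mul_self,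
    smul_mul_assoc, unipotentSum_mul_elA]
  module

lemma unipotentSum_mul_elEp :
    unipotentSum R F * elEp R F = (Fintype.card F - 1 : R) • bottomRowClass R F true false := by
  rw [elEp_eq_unipotentSum_mul_elB_sub, mul_sub, ← mul_assoc, unipotentSum_mul_self,
    smul_mul_assoc, unipotentSum_mul_elB]
  module

lemma unipotentSum_mul_elC :
    unipotentSum R F * elC R F = (Fintype.card F - 2 : R) • bottomRowClass R F true true := by
  rw [elC_eq_unipotentSum_mul_elDm_sub, mul_sub, mul_sub, ← mul_assoc, unipotentSum_mul_self,
    smul_mul_assoc, unipotentSum_mul_elDm, unipotentSum_mul_elEm]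
  module

variable (F) in
noncomputable def pi2 (q : ℚ) : MonoidAlgebra ℚ SL(2, F) :=
  ((q - 2) / (2 * (q ^ 2 - q))) • (elA ℚ F + elB ℚ F) + (q * (q - 1) ^ 2)⁻¹ • elC ℚ F -
    ((q - 2) / (2 * q * (q - 1) ^ 2)) • (elDp ℚ F + elDm ℚ F + elEp ℚ F + elEm ℚ F)

lemma of_mul_pi2_of_diag {t : SL(2, F)} (h₀₁ : t 0 1 = 0) (h₁₀ : t 1 0 = 0) (q : ℚ) :
    of ℚ SL(2, F) t * pi2 F q = pi2 F q := by
  simp only [pi2, elA, elB, elC, elDp, elDm, elEp, elEm, mul_add, mul_sub, mul_smul_comm,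
    of_mul_suppClass_of_diag h₀₁ h₁₀]

lemma of_weylElement_mul_pi2 (q : ℚ) : of ℚ SL(2, F) weylElement * pi2 F q = pi2 F q := by
  simp only [pi2, elA, elB, elC, elDp, elDm, elEp, elEm, mul_add, mul_sub, mul_smul_comm,
    of_weylElement_mul_suppClass]
  module

lemma unipotentSum_mul_pi2 : unipotentSum ℚ F * pi2 F (Fintype.card F) = 0 := by
  simp only [pi2, mul_add, mul_sub, mul_smul_comm, unipotentSum_mul_elA, unipotentSum_mul_elB,
    unipotentSum_mul_elC, unipotentSum_mul_elDp, unipotentSum_mul_elDm, unipotentSum_mul_elEp,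
    unipotentSum_mul_elEm]
  -- writing `pi2 = α (A + B) + β C - γ (D₊ + D₋ + E₊ + E₋)`, the three row classes get the
  -- coefficients `α - (q - 1) γ` (twice) and `(q - 2) β - 2 γ`, all zero
  match_scalars <;> field_simp <;> ring

lemma elA_mul_pi2 (q : ℚ) : elA ℚ F * pi2 F q = (Fintype.card F - 1 : ℚ) • pi2 F q :=
  elA_mul_of_forall_diag fun _ h₀₁ h₁₀ ↦ of_mul_pi2_of_diag h₀₁ h₁₀ q

lemma elB_mul_pi2 (q : ℚ) : elB ℚ F * pi2 F q = (Fintype.card F - 1 : ℚ) • pi2 F q := by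
  rw [elB, ← of_weylElement_mul_suppClass, ← elA, mul_assoc, elA_mul_pi2, mul_smul_comm,
    of_weylElement_mul_pi2]

lemma elDp_mul_pi2 :
    elDp ℚ F * pi2 F (Fintype.card F) = (1 - Fintype.card F : ℚ) • pi2 F (Fintype.card F) := by
  rw [elDp_eq_unipotentSum_mul_elA_sub, sub_mul, mul_assoc, elA_mul_pi2, mul_smul_comm,
    unipotentSum_mul_pi2]
  module

lemma elEp_mul_pi2 :
    elEp ℚ F * pi2 F (Fintype.card F) = (1 - Fintype.card F : ℚ) • pi2 F (Fintype.card F) := by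
  rw [elEp_eq_unipotentSum_mul_elB_sub, sub_mul, mul_assoc, elB_mul_pi2, mul_smul_comm,
    unipotentSum_mul_pi2]
  module

lemma elEm_mul_pi2 :
    elEm ℚ F * pi2 F (Fintype.card F) = (1 - Fintype.card F : ℚ) • pi2 F (Fintype.card F) := by
  rw [elEm, ← of_weylElement_mul_suppClass, ← elDp, mul_assoc, elDp_mul_pi2, mul_smul_comm,
    of_weylElement_mul_pi2]

lemma elDm_mul_pi2 :
    elDm ℚ F * pi2 F (Fintype.card F) = (1 - Fintype.card F : ℚ) • pi2 F (Fintype.card F) := by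
  rw [elDm, ← of_weylElement_mul_suppClass, ← elEp, mul_assoc, elEp_mul_pi2, mul_smul_comm,
    of_weylElement_mul_pi2]

lemma elC_mul_pi2 : elC ℚ F * pi2 F (Fintype.card F) =
    (2 * (Fintype.card F - 1) : ℚ) • pi2 F (Fintype.card F) := by
  rw [elC_eq_unipotentSum_mul_elDm_sub, sub_mul, sub_mul, mul_assoc, elDm_mul_pi2, elEm_mul_pi2,
    mul_smul_comm, unipotentSum_mul_pi2]
  module

end SL2

theorem pi2_character_general (F : Type*) [Field F] [Fintype F] [DecidableEq F]
    (q : ℚ) (hqc : q = Fintype.card F)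
    (π₂ : MonoidAlgebra ℚ (Matrix.SpecialLinearGroup (Fin 2) F))
    (hπ₂ : π₂ = ((q - 2) / (2 * (q ^ 2 - q))) • (elA ℚ F + elB ℚ F) +
      (q * (q - 1) ^ 2)⁻¹ • elC ℚ F -
      ((q - 2) / (2 * q * (q - 1) ^ 2)) • (elDp ℚ F + elDm ℚ F + elEp ℚ F + elEm ℚ F)) :
    elA ℚ F * π₂ = (q - 1) • π₂ ∧
    elB ℚ F * π₂ = (q - 1) • π₂ ∧
    elC ℚ F * π₂ = (2 * (q - 1)) • π₂ ∧
    elDp ℚ F * π₂ = (1 - q) • π₂ ∧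
    elDm ℚ F * π₂ = (1 - q) • π₂ ∧
    elEp ℚ F * π₂ = (1 - q) • π₂ ∧
    elEm ℚ F * π₂ = (1 - q) • π₂ := by
  obtain rfl : π₂ = SL2.pi2 F q := hπ₂
  subst hqc
  exact ⟨SL2.elA_mul_pi2 _, SL2.elB_mul_pi2 _, SL2.elC_mul_pi2, SL2.elDp_mul_pi2,
    SL2.elDm_mul_pi2, SL2.elEp_mul_pi2, SL2.elEm_mul_pi2⟩

theorem pi2_character (F : Type*) [Field F] [Fintype F] [DecidableEq F]
    (hq : 2 < Fintype.card F) (q : ℚ) (hqc : q = Fintype.card F)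
    (π₂ : MonoidAlgebra ℚ (Matrix.SpecialLinearGroup (Fin 2) F))
    (hπ₂ : π₂ = ((q - 2) / (2 * (q ^ 2 - q))) • (elA ℚ F + elB ℚ F) +
      (q * (q - 1) ^ 2)⁻¹ • elC ℚ F -
      ((q - 2) / (2 * q * (q - 1) ^ 2)) • (elDp ℚ F + elDm ℚ F + elEp ℚ F + elEm ℚ F)) :
    elA ℚ F * π₂ = (q - 1) • π₂ ∧
    elB ℚ F * π₂ = (q - 1) • π₂ ∧
    elC ℚ F * π₂ = (2 * (q - 1)) • π₂ ∧
    elDp ℚ F * π₂ = (1 - q) • π₂ ∧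
    elDm ℚ F * π₂ = (1 - q) • π₂ ∧
    elEp ℚ F * π₂ = (1 - q) • π₂ ∧
    elEm ℚ F * π₂ = (1 - q) • π₂ :=
  pi2_character_general F q hqc π₂ hπ₂
end
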